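/- arXiv:math/0408164 — 2 statements merged into one kernel-verified Lean document; each statement's English description precedes it below -/
import Mathlib

section
/- Every partition λ satisfying: h(λ) < p, the p-core of λ is empty, and all λ-normal nodes have the same residue mod p, is a staircase partition st(r₂,…,r_k; i₁,…,i_{k−1}), i.e. λ = P(Λ) where Λ is the abacus with beads at (−∞,0) ∪ [p i₁, p i₁ + r₂) ∪ [p i₂ + r₂, p i₂ + r₃) ∪ ⋯ ∪ [p i_{k−1} + r_{k−1}, p i_{k−1} + r_k), for some integers k ≥ 1, 0 < r₂ < ⋯ < r_k < p and i₁ > ⋯ > i_{k−1} ≥ 0 (with λ = ∅ when k = 1). -/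
open scoped Classical

/-- A partition of a natural number: a weakly decreasing, eventually zero sequence of
naturals; `part i` is the `i`-th part for `i ≥ 1` (the value `part 0` is irrelevant). -/
structure Ptn where
  part : ℕ → ℕ
  antitone : ∀ ⦃i j : ℕ⦄, 1 ≤ i → i ≤ j → part j ≤ part i
  eventually_zero : ∃ N, ∀ i, N ≤ i → part i = 0

namespace Ptn

/-- The height of a partition: the number of (equivalently, the largest index of a)
nonzero part. -/
noncomputable def height (l : Ptn) : ℕ := sSup {i | 1 ≤ i ∧ l.part i ≠ 0}

/-- Row `i` carries a removable node `(i, λ_i)`. -/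
def Removable (l : Ptn) (i : ℕ) : Prop := 1 ≤ i ∧ l.part (i + 1) < l.part i

/-- Row `i` carries an addable node `(i, λ_i + 1)`. -/
def Addable (l : Ptn) (i : ℕ) : Prop := i = 1 ∨ (2 ≤ i ∧ l.part i < l.part (i - 1))

/-- Residue mod `p` of the removable node in row `i`, namely `λ_i - i  (mod p)`. -/
def remRes (p : ℕ) (l : Ptn) (i : ℕ) : ZMod p := (((l.part i : ℤ) - (i : ℤ) : ℤ) : ZMod p)

/-- Residue mod `p` of the addable node in row `i`, namely `λ_i + 1 - i  (mod p)`. -/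
def addRes (p : ℕ) (l : Ptn) (i : ℕ) : ZMod p :=
  (((l.part i : ℤ) + 1 - (i : ℤ) : ℤ) : ZMod p)

/-- The removable node in row `r` is normal (signature rule): for every `u < r` the
number of addable nodes of the same residue in rows `[u, r)` is at most the number of
removable nodes of the same residue in rows `(u, r)`. -/
def Normal (p : ℕ) (l : Ptn) (r : ℕ) : Prop :=
  l.Removable r ∧ ∀ u, 1 ≤ u → u < r →
    ((Finset.Ico u r).filter (fun i => l.Addable i ∧ l.addRes p i = l.remRes p r)).card ≤
    ((Finset.Ioo u r).filter (fun i => l.Removable i ∧ l.remRes p i = l.remRes p r)).card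

/-- A good node is the highest normal node of its residue. -/
def Good (p : ℕ) (l : Ptn) (r : ℕ) : Prop :=
  l.Normal p r ∧ ∀ r', l.Normal p r' → l.remRes p r' = l.remRes p r → r ≤ r'

end Ptn

/-- Dominance order on part-functions: all partial sums of `f` dominate those of `g`. -/
def Dominates (f g : ℕ → ℕ) : Prop :=
  ∀ i, ∑ j ∈ Finset.Icc 1 i, g j ≤ ∑ j ∈ Finset.Icc 1 i, f j

/-- Remove one node from row `r`. -/
def removeAt (f : ℕ → ℕ) (r : ℕ) : ℕ → ℕ := fun i => if i = r then f i - 1 else f i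

/-- The canonical beta-set of a partition: `n` is a bead iff `n = λ_i - i` for some `i ≥ 1`. -/
def Beta (l : Ptn) (n : ℤ) : Prop := ∃ i : ℕ, 1 ≤ i ∧ (l.part i : ℤ) - (i : ℤ) = n

/-- `m` is obtained from `l` by removing one rim `p`-hook (moving a bead of the canonical
beta-set up by `p`). -/
def RemoveHook (p : ℕ) (l m : Ptn) : Prop :=
  ∃ a : ℤ, Beta l a ∧ ¬ Beta l (a - p) ∧
    ∀ n : ℤ, Beta m n ↔ (n ≠ a ∧ (n = a - (p : ℤ) ∨ Beta l n))

/-- A partition with no rim `p`-hook. -/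
def IsPCore (p : ℕ) (c : Ptn) : Prop := ¬ ∃ m, RemoveHook p c m

/-- `c` is the `p`-core of `l`. -/
def PCore (p : ℕ) (l c : Ptn) : Prop :=
  Relation.ReflTransGen (RemoveHook p) l c ∧ IsPCore p c

/-- The `p`-core of `l` is empty. -/
def EmptyCore (p : ℕ) (l : Ptn) : Prop :=
  ∃ c : Ptn, PCore p l c ∧ ∀ i, 1 ≤ i → c.part i = 0

/-- An abacus: eventually beads (`true`) to the left and spaces (`false`) to the right. -/
structure Abacus where
  f : ℤ → Bool
  low : ∃ N : ℤ, ∀ n, n ≤ N → f n = true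
  high : ∃ N : ℤ, ∀ n, N ≤ n → f n = false

/-- The abacus `Λ` displays the part-function `l`: if `a 1 > a 2 > ⋯` enumerates the
beads of `Λ`, then `l i` is the number of spaces below the `i`-th bead. -/
def Displays (Λ : Abacus) (l : ℕ → ℕ) : Prop :=
  ∃ a : ℕ → ℤ,
    (∀ i, 1 ≤ i → a (i + 1) < a i) ∧
    (∀ n : ℤ, Λ.f n = true ↔ ∃ i, 1 ≤ i ∧ a i = n) ∧
    (∀ i, 1 ≤ i → l i = Set.ncard {n : ℤ | n ≤ a i ∧ Λ.f n = false})

/-! Place the beads at the shifted beta-numbers `λ_i + h - i`, `h = h(λ)`: every negative position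
is a bead, and the `h` nonempty rows give the beads at positive positions. For large `N` the
multiset of residues mod `p` of the first `N` beta-numbers does not change when a rim `p`-hook is
removed; comparing with the empty partition, an empty `p`-core and `h < p` leave exactly one
positive bead on each runner `d < h`, at `p w_d + d` say, and none on the other runners. If
`w_d < w_{d+1}`, the rows of the beads on runners `d + 1` and `0` both carry normal nodes, whose
residues differ by `d + 1 ≢ 0`. So `w` is antitone on `[0, h)`, and its maximal constant
stretches are the blocks of the staircase. -/

theorem Finset.sum_singleton_eq_map_val {α β : Type*} (s : Finset α) (f : α → β) :
    ∑ a ∈ s, ({f a} : Multiset β) = s.val.map f := by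
  simpa [Finset.sum_map_val, Function.comp_def] using Multiset.sum_map_singleton (s.val.map f)

theorem ZMod.natCast_injOn_Iio (p : ℕ) : Set.InjOn (Nat.cast : ℕ → ZMod p) (Set.Iio p) :=
  fun a ha b hb h => by
    simpa [ZMod.val_natCast_of_lt ha, ZMod.val_natCast_of_lt hb] using congrArg ZMod.val h

theorem ZMod.exists_eq_mul_add_of_intCast_eq {p d : ℕ} (hd : d < p) {n : ℤ} (hn : 0 ≤ n)
    (h : (n : ZMod p) = d) : ∃ q : ℕ, n = p * q + d := by
  have hmod : n % p = d := by
    rw [← Int.cast_natCast, ZMod.intCast_eq_intCast_iff'] at h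
    rw [h, Int.emod_eq_of_lt (by omega) (by omega)]
  refine ⟨(n / p).toNat, ?_⟩
  rw [Int.toNat_of_nonneg (Int.ediv_nonneg hn (by omega)), ← hmod]
  exact (Int.mul_ediv_add_emod n p).symm

structure IsBlockDecomposition (w : ℕ → ℕ) (h k : ℕ) (r ι : ℕ → ℕ) : Prop where
  one_le : 1 ≤ k
  first : r 1 = 0
  last : r k = h
  lt_succ : ∀ t, 1 ≤ t → t < k → r t < r (t + 1)
  value_lt : ∀ t, 1 ≤ t → t + 1 ≤ k - 1 → ι (t + 1) < ι t
  lt_iff : ∀ d, d < h ↔ ∃ t, 1 ≤ t ∧ t ≤ k - 1 ∧ r t ≤ d ∧ d < r (t + 1)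
  eq_value : ∀ t, 1 ≤ t → t ≤ k - 1 → ∀ d, r t ≤ d → d < r (t + 1) → w d = ι t

namespace IsBlockDecomposition

variable {w : ℕ → ℕ} {h k : ℕ} {r ι : ℕ → ℕ}

lemma zero (w : ℕ → ℕ) : IsBlockDecomposition w 0 1 (fun _ => 0) (fun _ => 0) :=
  ⟨le_rfl, rfl, rfl, by omega, by omega, by simp, by omega⟩

lemma snoc {m v : ℕ} (hD : IsBlockDecomposition w m k r ι) (hmh : m < h)
    (hv : ∀ d, m ≤ d → d < h → w d = v) (hjump : 0 < m → v < w (m - 1)) :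
    IsBlockDecomposition w h (k + 1) (Function.update r (k + 1) h) (Function.update ι k v) := by
  obtain ⟨hk, hr1, hrk, hr, hι, hcover, hconst⟩ := hD
  have hr' : ∀ t ≤ k, Function.update r (k + 1) h t = r t :=
    fun t ht => Function.update_of_ne (by omega) _ _
  have hι' : ∀ t < k, Function.update ι k v t = ι t :=
    fun t ht => Function.update_of_ne (by omega) _ _
  refine ⟨by omega, by rw [hr' 1 hk, hr1], Function.update_self .., fun t ht htk => ?_,
    fun t ht htk => ?_, fun d => ⟨fun hd => ?_, ?_⟩, fun t ht htk d hrd hdr => ?_⟩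
  · rcases (show t < k ∨ t = k by omega) with htk | rfl
    · rw [hr' t htk.le, hr' (t + 1) htk]
      exact hr t ht htk
    · rw [hr' t le_rfl, Function.update_self, hrk]
      exact hmh
  · rcases (show t + 1 < k ∨ t + 1 = k by omega) with htk | htk
    · rw [hι' _ htk, hι' t (by omega)]
      exact hι t ht (by omega)
    · have hrt := hr t ht (by omega)
      rw [htk, hrk] at hrt
      rw [htk, Function.update_self, hι' t (by omega),
        ← hconst t ht (by omega) (m - 1) (by omega) (by rw [htk, hrk]; omega)]
      exact hjump (by omega)
  · rcases lt_or_ge d m with hdm | hdm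
    · obtain ⟨t, ht, htk, h1, h2⟩ := (hcover d).1 hdm
      exact ⟨t, ht, by omega, by rwa [hr' t (by omega)], by rwa [hr' (t + 1) (by omega)]⟩
    · exact ⟨k, hk, by omega, by rwa [hr' k le_rfl, hrk], by rwa [Function.update_self]⟩
  · rintro ⟨t, ht, htk, h1, h2⟩
    rcases (show t < k ∨ t = k by omega) with htk | rfl
    · rw [hr' t htk.le] at h1
      rw [hr' (t + 1) htk] at h2
      exact ((hcover d).2 ⟨t, ht, by omega, h1, h2⟩).trans hmh
    · rwa [Function.update_self] at h2
  · rcases (show t < k ∨ t = k by omega) with htk | rfl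
    · rw [hr' t htk.le] at hrd
      rw [hr' (t + 1) htk] at hdr
      rw [hι' t htk]
      exact hconst t ht (by omega) d hrd hdr
    · rw [hr' t le_rfl, hrk] at hrd
      rw [Function.update_self] at hdr ⊢
      exact hv d hrd hdr

lemma exists_mul_add_iff (hD : IsBlockDecomposition w h k r ι) (p : ℕ) (n : ℤ) :
    (∃ d < h, n = p * w d + d) ↔ ∃ t, 1 ≤ t ∧ t ≤ k - 1 ∧
      ((p * ι t + r t : ℕ) : ℤ) ≤ n ∧ n < ((p * ι t + r (t + 1) : ℕ) : ℤ) := by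
  constructor
  · rintro ⟨d, hd, rfl⟩
    obtain ⟨t, ht, htk, hrd, hdr⟩ := (hD.lt_iff d).1 hd
    rw [hD.eq_value t ht htk d hrd hdr]
    exact ⟨t, ht, htk, by push_cast; omega, by push_cast; omega⟩
  · rintro ⟨t, ht, htk, hlo, hhi⟩
    push_cast at hlo hhi
    obtain ⟨d, rfl⟩ : ∃ d : ℕ, n = p * ι t + d := ⟨(n - p * ι t).toNat, by omega⟩
    have hrd : r t ≤ d := by omega
    have hdr : d < r (t + 1) := by omega
    exact ⟨d, (hD.lt_iff d).2 ⟨t, ht, htk, hrd, hdr⟩, by rw [hD.eq_value t ht htk d hrd hdr]⟩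

end IsBlockDecomposition

lemma AntitoneOn.exists_last_block {w : ℕ → ℕ} {h : ℕ} (hw : AntitoneOn w (Set.Iio h))
    (hh : 0 < h) :
    ∃ m < h, (∀ d, m ≤ d → d < h → w d = w (h - 1)) ∧ (0 < m → w (h - 1) < w (m - 1)) := by
  have hex : ∃ m, w m = w (h - 1) := ⟨h - 1, rfl⟩
  have hmh : Nat.find hex < h := (Nat.find_min' hex rfl).trans_lt (by omega)
  refine ⟨Nat.find hex, hmh, fun d hmd hdh => le_antisymm ?_ ?_, fun hm => ?_⟩
  · exact (hw hmh hdh hmd).trans_eq (Nat.find_spec hex)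
  · exact hw hdh (show h - 1 < h by omega) (by omega)
  · exact (hw (show Nat.find hex - 1 < h by omega) (show h - 1 < h by omega) (by omega)).lt_of_ne
      fun heq => Nat.find_min hex (by omega) heq.symm

theorem AntitoneOn.exists_isBlockDecomposition {w : ℕ → ℕ} {h : ℕ}
    (hw : AntitoneOn w (Set.Iio h)) : ∃ k r ι, IsBlockDecomposition w h k r ι := by
  induction h using Nat.strong_induction_on with
  | _ h ih =>
  rcases Nat.eq_zero_or_pos h with rfl | hh
  · exact ⟨_, _, _, .zero w⟩
  obtain ⟨m, hmh, hlast, hjump⟩ := hw.exists_last_block hh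
  obtain ⟨k, r, ι, hD⟩ := ih m hmh (hw.mono (Set.Iio_subset_Iio hmh.le))
  exact ⟨_, _, _, hD.snoc hmh hlast hjump⟩

namespace Ptn

section Abacus

variable (l : Ptn)

lemma bddAbove_support : BddAbove {i | 1 ≤ i ∧ l.part i ≠ 0} := by
  obtain ⟨N, hN⟩ := l.eventually_zero
  exact ⟨N, fun i hi => by_contra fun hlt => hi.2 (hN i (le_of_not_ge hlt))⟩

lemma part_eq_zero_iff {i : ℕ} (hi : 1 ≤ i) : l.part i = 0 ↔ l.height < i := by
  refine ⟨fun h0 => ?_, fun hlt => by_contra fun hne =>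
    (le_csSup l.bddAbove_support ⟨hi, hne⟩).not_gt hlt⟩
  by_contra! hle
  have hne : {i | 1 ≤ i ∧ l.part i ≠ 0}.Nonempty := by
    refine Set.nonempty_iff_ne_empty.2 fun hempty => ?_
    rw [height, hempty, csSup_empty] at hle
    exact absurd hle (by simp; omega)
  exact (Nat.sSup_mem hne l.bddAbove_support).2
    (Nat.eq_zero_of_le_zero ((l.antitone hi hle).trans_eq h0))

/-- The beta-numbers shifted by the height `h`, so that the beads at nonnegative positions are
exactly those of the `h` nonempty rows. -/
noncomputable def bead (i : ℕ) : ℤ := l.part i + l.height - i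

def IsBead (n : ℤ) : Prop := ∃ i, 1 ≤ i ∧ l.bead i = n

lemma bead_strictAntiOn : StrictAntiOn l.bead (Set.Ici 1) := by
  intro i hi j _ hij
  have := l.antitone hi hij.le
  simp only [bead]
  omega

lemma bead_of_height_lt {i : ℕ} (hi : l.height < i) : l.bead i = l.height - i := by
  simp [bead, (l.part_eq_zero_iff (by omega)).2 hi]

lemma bead_pos_iff {i : ℕ} (hi : 1 ≤ i) : 0 < l.bead i ↔ i ≤ l.height := by
  have := l.part_eq_zero_iff hi
  simp only [bead]
  omega

lemma bead_ne_zero {i : ℕ} (hi : 1 ≤ i) : l.bead i ≠ 0 := by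
  have := l.part_eq_zero_iff hi
  simp only [bead]
  omega

lemma isBead_of_neg {n : ℤ} (hn : n < 0) : l.IsBead n :=
  ⟨l.height + (-n).toNat, by omega, by rw [bead_of_height_lt _ (by omega)]; omega⟩

noncomputable def abacus : Abacus where
  f n := decide (l.IsBead n)
  low := ⟨-1, fun _ hn => decide_eq_true (l.isBead_of_neg (by omega))⟩
  high := ⟨l.bead 1 + 1, fun _ hn => decide_eq_false fun ⟨_, hi, hin⟩ => by
    have := l.bead_strictAntiOn.antitoneOn (le_refl 1) hi hi
    omega⟩

lemma abacus_f {n : ℤ} : l.abacus.f n = true ↔ l.IsBead n := decide_eq_true_iff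

lemma ncard_nonBeads_le_bead {i : ℕ} (hi : 1 ≤ i) :
    {n : ℤ | n ≤ l.bead i ∧ l.abacus.f n = false}.ncard = l.part i := by
  have hanti := l.bead_strictAntiOn
  -- count the positions in `[bead (i + h), bead i] = [-i, bead i]` not taken by rows `i, …, i + h`
  obtain ⟨N, hN_def⟩ : ∃ N, N = i + l.height := ⟨_, rfl⟩
  have hN : l.bead N = -i := by rw [bead_of_height_lt _ (by omega)]; omega
  have hset : {n : ℤ | n ≤ l.bead i ∧ l.abacus.f n = false} =
      ↑(Finset.Icc (-(i : ℤ)) (l.bead i) \ (Finset.Icc i N).image l.bead) := by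
    ext n
    simp only [Set.mem_ofPred_eq, Bool.eq_false_iff, ne_eq, abacus_f, Finset.coe_sdiff,
      Finset.coe_Icc, Finset.coe_image, Set.mem_sdiff, Set.mem_Icc, Set.mem_image]
    constructor
    · rintro ⟨hle, hn⟩
      refine ⟨⟨?_, hle⟩, fun ⟨j, hj, hjn⟩ => hn ⟨j, by omega, hjn⟩⟩
      by_contra hlt
      exact hn (l.isBead_of_neg (by omega))
    · rintro ⟨⟨hlo, hle⟩, hnot⟩
      refine ⟨hle, ?_⟩
      rintro ⟨j, hj, rfl⟩
      rcases lt_or_ge j i with hji | hij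
      · exact (hanti hj hi hji).not_ge hle
      rcases le_or_gt j N with hjN | hNj
      · exact hnot ⟨j, ⟨hij, hjN⟩, rfl⟩
      · have := hanti (show 1 ≤ N by omega) hj hNj
        omega
  have hsub : (Finset.Icc i N).image l.bead ⊆ Finset.Icc (-(i : ℤ)) (l.bead i) := by
    intro n hn
    obtain ⟨j, hj, rfl⟩ := Finset.mem_image.1 hn
    rw [Finset.mem_Icc] at hj ⊢
    have hj1 : 1 ≤ j := hi.trans hj.1
    exact ⟨hN ▸ hanti.antitoneOn hj1 (show 1 ≤ N by omega) hj.2, hanti.antitoneOn hi hj1 hj.1⟩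
  have hinj : Set.InjOn l.bead (Finset.Icc i N) :=
    hanti.injOn.mono fun j hj => hi.trans (Finset.mem_Icc.1 (Finset.mem_coe.1 hj)).1
  rw [hset, Set.ncard_coe_finset, Finset.card_sdiff_of_subset hsub,
    Finset.card_image_of_injOn hinj, Int.card_Icc, Nat.card_Icc]
  simp only [bead]
  omega

lemma abacus_displays : Displays l.abacus l.part :=
  ⟨l.bead, fun i hi => l.bead_strictAntiOn hi (by simp) (by omega),
    fun _ => l.abacus_f, fun _ hi => (l.ncard_nonBeads_le_bead hi).symm⟩

end Abacus

section Residues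

variable (p : ℕ) (l : Ptn)

/-- For `N ≥ height` these are the residues of the beta-numbers `≥ -N`, which is why removing a
rim `p`-hook does not change them once `N` is large. -/
noncomputable def residues (N : ℕ) : Multiset (ZMod p) := ∑ i ∈ Finset.Ioc 0 N, {l.remRes p i}

noncomputable def betaWindow (N : ℕ) : Finset ℤ :=
  (Finset.Ioc 0 N).image fun i => (l.part i : ℤ) - i

lemma beta_injOn : Set.InjOn (fun i => (l.part i : ℤ) - i) (Set.Ici 1) :=
  fun i hi j hj h => l.bead_strictAntiOn.injOn hi hj (by simp only [bead] at h ⊢; omega)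

variable {l} in
lemma mem_betaWindow {N : ℕ} (hN : l.height ≤ N) {n : ℤ} :
    n ∈ l.betaWindow N ↔ -(N : ℤ) ≤ n ∧ Beta l n := by
  simp only [betaWindow, Finset.mem_image, Finset.mem_Ioc, Beta]
  constructor
  · rintro ⟨i, ⟨hi0, hiN⟩, rfl⟩
    exact ⟨by omega, i, hi0, rfl⟩
  · rintro ⟨hn, i, hi, rfl⟩
    refine ⟨i, ⟨hi, ?_⟩, rfl⟩
    by_contra hlt
    have := (l.part_eq_zero_iff hi).2 (by omega)
    omega

lemma residues_eq_sum_betaWindow (N : ℕ) :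
    l.residues p N = ∑ n ∈ l.betaWindow N, {(n : ZMod p)} := by
  rw [betaWindow, Finset.sum_image fun i hi j hj h =>
    l.beta_injOn (Finset.mem_Ioc.1 hi).1 (Finset.mem_Ioc.1 hj).1 h]
  simp [residues, remRes]

lemma _root_.RemoveHook.residues_eventuallyEq {l m : Ptn} (h : RemoveHook p l m) :
    l.residues p =ᶠ[Filter.atTop] m.residues p := by
  obtain ⟨a, ha, hap, hm⟩ := h
  filter_upwards [Filter.eventually_ge_atTop l.height, Filter.eventually_ge_atTop m.height,
    Filter.eventually_ge_atTop (p - a).toNat] with N hlN hmN haN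
  have hne : a - p ≠ a := fun h => hap (by rwa [h])
  have hwin : m.betaWindow N = insert (a - p) ((l.betaWindow N).erase a) := by
    ext n
    rw [mem_betaWindow hmN, hm, Finset.mem_insert, Finset.mem_erase, mem_betaWindow hlN]
    constructor
    · rintro ⟨hn, hna, rfl | hb⟩
      exacts [Or.inl rfl, Or.inr ⟨hna, hn, hb⟩]
    · rintro (rfl | ⟨hna, hn, hb⟩)
      exacts [⟨by omega, hne, Or.inl rfl⟩, ⟨hn, hna, Or.inr hb⟩]
  have hnot : a - p ∉ (l.betaWindow N).erase a :=
    fun h => hap ((mem_betaWindow hlN).1 (Finset.mem_of_mem_erase h)).2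
  have hmem : a ∈ l.betaWindow N := (mem_betaWindow hlN).2 ⟨by omega, ha⟩
  rw [residues_eq_sum_betaWindow, residues_eq_sum_betaWindow, hwin, Finset.sum_insert hnot,
    ← Finset.add_sum_erase _ _ hmem]
  simp

lemma residues_eventuallyEq_of_reflTransGen {l m : Ptn}
    (h : Relation.ReflTransGen (RemoveHook p) l m) :
    l.residues p =ᶠ[Filter.atTop] m.residues p := by
  induction h with
  | refl => rfl
  | tail _ hstep ih => exact ih.trans (hstep.residues_eventuallyEq p)

lemma remRes_of_part_eq_zero {i : ℕ} (h : l.part i = 0) : l.remRes p i = -(i : ZMod p) := by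
  simp [remRes, h]

lemma remRes_eq_bead_sub (i : ℕ) : l.remRes p i = (l.bead i : ZMod p) - l.height := by
  simp only [remRes, bead]; push_cast; ring

lemma addRes_eq_bead_add (i : ℕ) : l.addRes p i = (l.bead i : ZMod p) + 1 - l.height := by
  simp only [addRes, bead]; push_cast; ring

end Residues

variable {p : ℕ} {l : Ptn}

lemma sum_remRes_of_emptyCore (hcore : EmptyCore p l) :
    ∑ i ∈ Finset.Ioc 0 l.height, ({l.remRes p i} : Multiset (ZMod p)) =
      ∑ i ∈ Finset.Ioc 0 l.height, {-(i : ZMod p)} := by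
  obtain ⟨c, ⟨hchain, -⟩, hc⟩ := hcore
  obtain ⟨N, hN, hhN⟩ := ((residues_eventuallyEq_of_reflTransGen p hchain).and
    (Filter.eventually_ge_atTop l.height)).exists
  have hl : ∀ i ∈ Finset.Ioc l.height N,
      ({l.remRes p i} : Multiset (ZMod p)) = {-(i : ZMod p)} := fun i hi => by
    rw [remRes_of_part_eq_zero _ _ ((l.part_eq_zero_iff (by simp at hi; omega)).2
      (Finset.mem_Ioc.1 hi).1)]
  have hc' : ∀ i ∈ Finset.Ioc 0 N, ({c.remRes p i} : Multiset (ZMod p)) = {-(i : ZMod p)} :=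
    fun i hi => by rw [remRes_of_part_eq_zero _ _ (hc i (Finset.mem_Ioc.1 hi).1)]
  simp only [residues] at hN
  rw [Finset.sum_congr rfl hc', ← Finset.sum_Ioc_consecutive _ (Nat.zero_le _) hhN,
    ← Finset.sum_Ioc_consecutive _ (Nat.zero_le _) hhN, Finset.sum_congr rfl hl] at hN
  exact add_right_cancel hN

lemma map_bead_eq_range_of_emptyCore (hcore : EmptyCore p l) :
    (Finset.Ioc 0 l.height).val.map (fun i => (l.bead i : ZMod p)) =
      (Finset.range l.height).val.map (Nat.cast) := by
  have h := congrArg (Multiset.map (· + (l.height : ZMod p))) (sum_remRes_of_emptyCore hcore)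
  have hrange : Finset.range l.height = (Finset.Ioc 0 l.height).image (l.height - ·) := by
    ext d
    simp only [Finset.mem_range, Finset.mem_image, Finset.mem_Ioc]
    exact ⟨fun hd => ⟨l.height - d, by omega, by omega⟩, by omega⟩
  rw [Finset.sum_singleton_eq_map_val, Finset.sum_singleton_eq_map_val, Multiset.map_map,
    Multiset.map_map] at h
  rw [hrange, Finset.image_val_of_injOn fun a ha b hb hab => by
    simp only [Finset.coe_Ioc, Set.mem_Ioc] at ha hb; omega, Multiset.map_map]
  convert h using 1 <;> refine Multiset.map_congr rfl fun i hi => ?_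
  · simp [remRes_eq_bead_sub]
  · simp only [Finset.mem_val, Finset.mem_Ioc] at hi
    simp [Nat.cast_sub hi.2]; ring

lemma bijOn_bead_of_emptyCore (hh : l.height < p) (hcore : EmptyCore p l) :
    Set.BijOn (fun i => (l.bead i : ZMod p)) (Set.Ioc 0 l.height)
      (Nat.cast '' Set.Iio l.height) := by
  have hmap := map_bead_eq_range_of_emptyCore hcore
  refine ⟨fun i hi => ?_, fun i hi j hj hij => ?_, fun c ⟨d, hd, hdc⟩ => ?_⟩
  · have hmem := Multiset.mem_map_of_mem (fun i => (l.bead i : ZMod p))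
      (show i ∈ (Finset.Ioc 0 l.height).val by simpa using hi)
    rw [hmap, Multiset.mem_map] at hmem
    obtain ⟨d, hd, hdi⟩ := hmem
    exact ⟨d, Finset.mem_range.1 hd, hdi⟩
  · refine Multiset.inj_on_of_nodup_map (hmap ▸ (Finset.range _).nodup.map_on ?_) i
      (by simpa using hi) j (by simpa using hj) hij
    intro a ha b hb
    exact ZMod.natCast_injOn_Iio p (show a < p by simp at ha; omega)
      (show b < p by simp at hb; omega)
  · have hmem := Multiset.mem_map_of_mem (Nat.cast : ℕ → ZMod p)
      (show d ∈ (Finset.range l.height).val by simpa using hd)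
    rw [← hmap, Multiset.mem_map] at hmem
    obtain ⟨i, hi, hid⟩ := hmem
    exact ⟨i, by simpa using hi, hid.trans hdc⟩

/-- `w d` is the level of the only nonnegative bead on runner `d`. -/
def HasRunnerLevels (p : ℕ) (l : Ptn) (w : ℕ → ℕ) : Prop :=
  ∀ n, l.IsBead n ↔ n < 0 ∨ ∃ d < l.height, n = p * w d + d

theorem exists_hasRunnerLevels (hh : l.height < p) (hcore : EmptyCore p l) :
    ∃ w, l.HasRunnerLevels p w := by
  have hbij := bijOn_bead_of_emptyCore hh hcore
  have hmem : ∀ j, 1 ≤ j → 0 ≤ l.bead j → j ∈ Set.Ioc 0 l.height := fun j hj hnn =>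
    ⟨hj, (l.bead_pos_iff hj).1 (hnn.lt_of_ne (l.bead_ne_zero hj).symm)⟩
  have hrow : ∀ d, ∃ q : ℕ, d < l.height → l.IsBead (p * q + d) := by
    intro d
    by_cases hd : d < l.height
    · obtain ⟨i, hi, hid⟩ := hbij.surjOn ⟨d, hd, rfl⟩
      obtain ⟨q, hq⟩ := ZMod.exists_eq_mul_add_of_intCast_eq (hd.trans hh)
        ((l.bead_pos_iff hi.1).2 hi.2).le hid
      exact ⟨q, fun _ => ⟨i, hi.1, hq⟩⟩
    · exact ⟨0, fun h => absurd h hd⟩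
  choose w hw using hrow
  refine ⟨w, fun n => ⟨?_, ?_⟩⟩
  · rintro ⟨i, hi, rfl⟩
    refine (lt_or_ge (l.bead i) 0).imp id fun hnn => ?_
    obtain ⟨d, hd, hid⟩ := hbij.mapsTo (hmem i hi hnn)
    obtain ⟨j, hj, hjd⟩ := hw d hd
    refine ⟨d, hd, ?_⟩
    rw [← hjd, hbij.injOn (hmem i hi hnn) (hmem j hj (by rw [hjd]; positivity))
      (by simp only [← hid, hjd]; simp)]
  · rintro (hneg | ⟨d, hd, rfl⟩)
    exacts [l.isBead_of_neg hneg, hw d hd]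

theorem normal_of_forall_isBead {i : ℕ} (hi : 1 ≤ i)
    (h : ∀ n, l.IsBead n → (n : ZMod p) = l.bead i - 1 → n < l.bead i - 1) : l.Normal p i := by
  have hanti := l.bead_strictAntiOn
  refine ⟨⟨hi, ?_⟩, fun u hu hui => ?_⟩
  · by_contra! hle
    have hpart := le_antisymm (l.antitone hi (Nat.le_succ i)) hle
    have hbead : l.bead (i + 1) = l.bead i - 1 := by simp only [bead, hpart]; push_cast; ring
    have := h _ ⟨i + 1, by omega, hbead⟩ (by push_cast; ring)
    omega
  · rw [Finset.card_eq_zero.2 (Finset.filter_eq_empty_iff.2 fun j hj hjres => ?_)]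
    · exact Nat.zero_le _
    rw [Finset.mem_Ico] at hj
    have hres := hjres.2
    rw [addRes_eq_bead_add, remRes_eq_bead_sub, sub_left_inj, ← eq_sub_iff_add_eq] at hres
    have := h _ ⟨j, by omega, rfl⟩ (by exact_mod_cast hres)
    have := hanti (show 1 ≤ j by omega) hi hj.2
    omega

lemma normal_of_bead_eq_succ {w : ℕ → ℕ} (hh : l.height < p) (hw : l.HasRunnerLevels p w)
    {d i : ℕ} (hd : d + 1 < l.height) (hlt : w d < w (d + 1)) (hi : 1 ≤ i)
    (hbi : l.bead i = p * w (d + 1) + (d + 1 : ℕ)) : l.Normal p i := by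
  refine normal_of_forall_isBead hi fun n hn hres => ?_
  rw [hbi] at hres ⊢
  rcases (hw n).1 hn with hneg | ⟨e, he, rfl⟩
  · have : (0 : ℤ) ≤ p * w (d + 1) := by positivity
    push_cast
    omega
  · obtain rfl : e = d := ZMod.natCast_injOn_Iio p (show e < p by omega) (show d < p by omega)
      (by simpa using hres)
    have : (p : ℤ) * w e < p * w (e + 1) := by
      exact_mod_cast Nat.mul_lt_mul_of_pos_left hlt (by omega)
    push_cast
    omega

lemma normal_of_bead_eq_mul {w : ℕ → ℕ} (hh : l.height < p) (hw : l.HasRunnerLevels p w)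
    {i : ℕ} (hi : 1 ≤ i) (hbi : l.bead i = p * w 0) : l.Normal p i := by
  have hp : 0 < p := by omega
  have hw₀ : 0 < w 0 := Nat.pos_of_ne_zero fun h0 => l.bead_ne_zero hi (by simp [hbi, h0])
  refine normal_of_forall_isBead hi fun n hn hres => ?_
  rw [hbi] at hres ⊢
  rcases (hw n).1 hn with hneg | ⟨e, he, rfl⟩
  · have : (1 : ℤ) ≤ p * w 0 := by exact_mod_cast Nat.mul_pos hp hw₀
    omega
  · have : ((e + 1 : ℕ) : ZMod p) = 0 := by
      simp at hres
      push_cast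
      rw [hres]
      ring
    have := ZMod.natCast_injOn_Iio p (show e + 1 < p by omega) (show 0 < p from hp)
      (by simpa using this)
    omega

theorem HasRunnerLevels.antitoneOn {w : ℕ → ℕ} (hh : l.height < p) (hw : l.HasRunnerLevels p w)
    (hres : ∀ r s, l.Normal p r → l.Normal p s → l.remRes p r = l.remRes p s) :
    AntitoneOn w (Set.Iio l.height) := by
  refine antitoneOn_of_add_one_le Set.ordConnected_Iio fun d _ _ hd => ?_
  replace hd : d + 1 < l.height := hd
  by_contra! hlt
  obtain ⟨i, hi, hbi⟩ := (hw _).2 (Or.inr ⟨d + 1, hd, rfl⟩)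
  obtain ⟨i₀, hi₀, hbi₀⟩ := (hw _).2 (Or.inr ⟨0, by omega, rfl⟩)
  have := hres i i₀ (normal_of_bead_eq_succ hh hw hd hlt hi hbi)
    (normal_of_bead_eq_mul hh hw hi₀ (by simpa using hbi₀))
  rw [remRes_eq_bead_sub, remRes_eq_bead_sub, hbi, hbi₀] at this
  have := ZMod.natCast_injOn_Iio p (show d + 1 < p by omega) (show 0 < p by omega)
    (by simpa using this)
  omega

end Ptn

theorem stmt13_general (p : ℕ) (l : Ptn)
    (hh : l.height < p)
    (hcore : EmptyCore p l)
    (hres : ∀ r s, l.Normal p r → l.Normal p s → l.remRes p r = l.remRes p s) :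
    ∃ (k : ℕ) (r ι : ℕ → ℕ), 1 ≤ k ∧ r 1 = 0 ∧
      (∀ t, 1 ≤ t → t < k → r t < r (t + 1)) ∧ r k < p ∧
      (∀ t, 1 ≤ t → t + 1 ≤ k - 1 → ι (t + 1) < ι t) ∧
      ∃ Λ : Abacus, Displays Λ l.part ∧
        ∀ n : ℤ, Λ.f n = true ↔
          (n < 0 ∨ ∃ t, 1 ≤ t ∧ t ≤ k - 1 ∧
            ((p * ι t + r t : ℕ) : ℤ) ≤ n ∧ n < ((p * ι t + r (t + 1) : ℕ) : ℤ)) := by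
  obtain ⟨w, hw⟩ := Ptn.exists_hasRunnerLevels hh hcore
  obtain ⟨k, r, ι, hD⟩ := (hw.antitoneOn hh hres).exists_isBlockDecomposition
  refine ⟨k, r, ι, hD.one_le, hD.first, hD.lt_succ, hD.last ▸ hh, hD.value_lt, l.abacus,
    l.abacus_displays, fun n => ?_⟩
  rw [l.abacus_f, hw, hD.exists_mul_add_iff]

/-- Every partition with height `< p`, empty `p`-core, and all normal nodes of a single
residue, is a staircase partition `st(r₂,…,r_k; i₁,…,i_{k-1})`. -/
theorem stmt13 (p : ℕ) (hp : 0 < p) (l : Ptn)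
    (hh : l.height < p)
    (hcore : EmptyCore p l)
    (hres : ∀ r s, l.Normal p r → l.Normal p s → l.remRes p r = l.remRes p s) :
    ∃ (k : ℕ) (r ι : ℕ → ℕ), 1 ≤ k ∧ r 1 = 0 ∧
      (∀ t, 1 ≤ t → t < k → r t < r (t + 1)) ∧ r k < p ∧
      (∀ t, 1 ≤ t → t + 1 ≤ k - 1 → ι (t + 1) < ι t) ∧
      ∃ Λ : Abacus, Displays Λ l.part ∧
        ∀ n : ℤ, Λ.f n = true ↔
          (n < 0 ∨ ∃ t, 1 ≤ t ∧ t ≤ k - 1 ∧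
            ((p * ι t + r t : ℕ) : ℤ) ≤ n ∧ n < ((p * ι t + r (t + 1) : ℕ) : ℤ)) :=
  stmt13_general p l hh hcore hres
end

section
/- Let λ, μ be partitions with χ(λ) = λ₁ − λ_{h(λ)} + h(λ) = p, both having empty p-core, h(μ) ≤ h(λ) < p, and such that every μ-normal node has residue equal to the residue of the bottom λ-removable node. Then h(μ) < h(λ). -/
open scoped Classical

/- ===================== Auxiliary development ===================== -/

section Aux

open Finset

private lemma int_dvd_small {P d : ℤ} (hP : 0 < P) (hd : P ∣ d) (h1 : -P < d) (h2 : d < P) :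
    d = 0 := by
  rcases hd with ⟨k, rfl⟩
  rcases lt_trichotomy k 0 with hk | hk | hk
  · nlinarith
  · simp [hk]
  · nlinarith

private lemma zmod_eq_iff (p : ℕ) (a b : ℤ) :
    ((a : ZMod p) = (b : ZMod p)) ↔ (p : ℤ) ∣ b - a := by
  rw [ZMod.intCast_eq_intCast_iff]
  exact Int.modEq_iff_dvd

namespace Ptn

lemma bddAbove_supp (l : Ptn) : BddAbove {i | 1 ≤ i ∧ l.part i ≠ 0} := by
  obtain ⟨N, hN⟩ := l.eventually_zero
  refine ⟨N, fun i hi => ?_⟩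
  by_contra hlt
  push_neg at hlt
  exact hi.2 (hN i hlt.le)

lemma part_eq_zero_of_height_lt (l : Ptn) {i : ℕ} (hi : l.height < i) : l.part i = 0 := by
  by_contra h
  have h1 : 1 ≤ i := by omega
  have : i ≤ l.height := le_csSup l.bddAbove_supp ⟨h1, h⟩
  omega

lemma part_height_ne_zero (l : Ptn) (h1 : 1 ≤ l.height) : l.part l.height ≠ 0 := by
  have hne : {i | 1 ≤ i ∧ l.part i ≠ 0}.Nonempty := by
    by_contra h
    rw [Set.not_nonempty_iff_eq_empty] at h
    have : l.height = 0 := by simp [Ptn.height, h]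
    omega
  exact (Nat.sSup_mem hne l.bddAbove_supp).2

lemma part_ne_zero (l : Ptn) {i : ℕ} (h1 : 1 ≤ i) (h2 : i ≤ l.height) : l.part i ≠ 0 := by
  have ha := l.antitone h1 h2
  have hb := l.part_height_ne_zero (h1.trans h2)
  omega

/-- `betaF l i = λ_i - i`, the canonical beta-number of row `i`. -/
def betaF (l : Ptn) (i : ℕ) : ℤ := (l.part i : ℤ) - (i : ℤ)

lemma remRes_eq_betaF (p : ℕ) (l : Ptn) (i : ℕ) :
    l.remRes p i = ((l.betaF i : ℤ) : ZMod p) := rfl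

lemma addRes_eq_betaF (p : ℕ) (l : Ptn) (i : ℕ) :
    l.addRes p i = ((l.betaF i + 1 : ℤ) : ZMod p) := by
  unfold Ptn.addRes Ptn.betaF
  congr 1
  ring

lemma betaF_strictAnti (l : Ptn) {i j : ℕ} (h1 : 1 ≤ i) (hij : i < j) :
    l.betaF j < l.betaF i := by
  have := l.antitone h1 hij.le
  unfold betaF
  omega

lemma betaF_ge_neg_height (l : Ptn) {i : ℕ} (h1 : 1 ≤ i) (h2 : i ≤ l.height) :
    -(l.height : ℤ) ≤ l.betaF i := by
  have h3 := l.antitone h1 h2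
  have h4 := l.part_height_ne_zero (h1.trans h2)
  unfold betaF
  omega

lemma beta_iff (l : Ptn) (n : ℤ) :
    Beta l n ↔ (n ≤ -(l.height : ℤ) - 1 ∨ ∃ i, 1 ≤ i ∧ i ≤ l.height ∧ l.betaF i = n) := by
  constructor
  · rintro ⟨i, h1, he⟩
    by_cases hi : i ≤ l.height
    · exact Or.inr ⟨i, h1, hi, he⟩
    · left
      have hz : l.part i = 0 := l.part_eq_zero_of_height_lt (by omega)
      rw [hz] at he
      omega
  · rintro (h | ⟨i, h1, h2, he⟩)
    · refine ⟨(-n).toNat, by omega, ?_⟩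
      have hz : l.part (-n).toNat = 0 := l.part_eq_zero_of_height_lt (by omega)
      rw [hz]
      omega
    · exact ⟨i, h1, he⟩

lemma beta_lt_top (l : Ptn) {n : ℤ} (h : Beta l n) : n < (l.part 1 : ℤ) := by
  obtain ⟨i, h1, he⟩ := h
  have := l.antitone le_rfl h1
  omega

end Ptn

noncomputable def cntB (p : ℕ) (l : Ptn) (c : ZMod p) (M N : ℤ) : ℕ :=
  ((Finset.Icc M N).filter (fun n : ℤ => Beta l n ∧ ((n : ZMod p) = c))).card

noncomputable def cntE (p : ℕ) (c : ZMod p) (M N : ℤ) : ℕ :=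
  ((Finset.Icc M N).filter (fun n : ℤ => n ≤ -1 ∧ ((n : ZMod p) = c))).card

noncomputable def DD (p : ℕ) (l : Ptn) (c : ZMod p) (M N : ℤ) : ℤ :=
  (cntB p l c M N : ℤ) - (cntE p c M N : ℤ)

lemma DD_mono_left (p : ℕ) (l : Ptn) (c : ZMod p) {M M' N : ℤ}
    (h1 : M' ≤ M) (h2 : M ≤ -(l.height : ℤ)) (h3 : M ≤ N) :
    DD p l c M' N = DD p l c M N := by
  have hsplit : Finset.Icc M' N = Finset.Ico M' M ∪ Finset.Icc M N := by
    ext n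
    simp only [Finset.mem_Icc, Finset.mem_Ico, Finset.mem_union]
    omega
  have hdisj : Disjoint (Finset.Ico M' M) (Finset.Icc M N) := by
    rw [Finset.disjoint_left]
    intro n hn hn'
    simp only [Finset.mem_Icc, Finset.mem_Ico] at hn hn'
    omega
  have key : ∀ n ∈ Finset.Ico M' M,
      ((Beta l n ∧ ((n : ZMod p) = c)) ↔ (n ≤ -1 ∧ ((n : ZMod p) = c))) := by
    intro n hn
    simp only [Finset.mem_Ico] at hn
    have hb : Beta l n := (l.beta_iff n).2 (Or.inl (by omega))
    have h1n : n ≤ -1 := by omega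
    tauto
  unfold DD cntB cntE
  rw [hsplit, Finset.filter_union, Finset.filter_union,
    Finset.card_union_of_disjoint (hdisj.mono (Finset.filter_subset _ _) (Finset.filter_subset _ _)),
    Finset.card_union_of_disjoint (hdisj.mono (Finset.filter_subset _ _) (Finset.filter_subset _ _)),
    Finset.filter_congr key]
  push_cast
  ring

lemma DD_mono_right (p : ℕ) (l : Ptn) (c : ZMod p) {M N N' : ℤ}
    (h1 : (l.part 1 : ℤ) ≤ N) (h2 : N ≤ N') (h3 : M ≤ N) :
    DD p l c M N' = DD p l c M N := by
  have hsplit : Finset.Icc M N' = Finset.Icc M N ∪ Finset.Ioc N N' := by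
    ext n
    simp only [Finset.mem_Icc, Finset.mem_Ioc, Finset.mem_union]
    omega
  have hdisj : Disjoint (Finset.Icc M N) (Finset.Ioc N N') := by
    rw [Finset.disjoint_left]
    intro n hn hn'
    simp only [Finset.mem_Icc, Finset.mem_Ioc] at hn hn'
    omega
  have e1 : (Finset.Ioc N N').filter (fun n : ℤ => Beta l n ∧ ((n : ZMod p) = c)) = ∅ := by
    rw [Finset.filter_eq_empty_iff]
    rintro n hn ⟨hb, -⟩
    simp only [Finset.mem_Ioc] at hn
    have := l.beta_lt_top hb
    omega
  have e2 : (Finset.Ioc N N').filter (fun n : ℤ => n ≤ -1 ∧ ((n : ZMod p) = c)) = ∅ := by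
    rw [Finset.filter_eq_empty_iff]
    rintro n hn ⟨hb, -⟩
    simp only [Finset.mem_Ioc] at hn
    have : (0:ℤ) ≤ (l.part 1 : ℤ) := Int.natCast_nonneg _
    omega
  unfold DD cntB cntE
  rw [hsplit, Finset.filter_union, Finset.filter_union, e1, e2]
  simp

noncomputable def DDc (p : ℕ) (l : Ptn) (c : ZMod p) : ℤ :=
  DD p l c (-(l.height : ℤ) - 1) (l.part 1)

lemma DD_eq_DDc (p : ℕ) (l : Ptn) (c : ZMod p) {M N : ℤ}
    (hM : M ≤ -(l.height : ℤ) - 1) (hN : (l.part 1 : ℤ) ≤ N) :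
    DD p l c M N = DDc p l c := by
  have h0 : (0:ℤ) ≤ (l.part 1 : ℤ) := Int.natCast_nonneg _
  have h1 : DD p l c M N = DD p l c M (l.part 1) :=
    DD_mono_right p l c le_rfl hN (by omega)
  rw [h1]
  exact DD_mono_left p l c hM (by omega) (by omega)

lemma DDc_hook (p : ℕ) (hp : 0 < p) {l m : Ptn} (hk : RemoveHook p l m) (c : ZMod p) :
    DDc p l c = DDc p m c := by
  obtain ⟨a, hal, hnal, hiff⟩ := hk
  set M : ℤ := min (-(l.height : ℤ) - 1) (min (-(m.height : ℤ) - 1) (a - p)) with hMdef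
  set N : ℤ := max (l.part 1) (max (m.part 1) a) with hNdef
  have haN : a ≤ N := le_trans (le_max_right _ _) (le_max_right _ _)
  have haM : M ≤ a - p := le_trans (min_le_right _ _) (min_le_right _ _)
  have hpz : (0:ℤ) ≤ (p:ℤ) := Int.natCast_nonneg _
  rw [← DD_eq_DDc p l c (M := M) (N := N) (min_le_left _ _) (le_max_left _ _),
      ← DD_eq_DDc p m c (M := M) (N := N)
        (le_trans (min_le_right _ _) (min_le_left _ _))
        (le_trans (le_max_left _ _) (le_max_right _ _))]
  have hap : (((a - p : ℤ)) : ZMod p) = ((a : ZMod p)) := by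
    push_cast
    simp
  have hcnt : cntB p m c M N = cntB p l c M N := by
    unfold cntB
    by_cases hc : ((a : ZMod p)) = c
    · have hmem : a ∈ (Finset.Icc M N).filter (fun n : ℤ => Beta l n ∧ ((n : ZMod p) = c)) := by
        simp only [Finset.mem_filter, Finset.mem_Icc]
        exact ⟨⟨by omega, haN⟩, hal, hc⟩
      have hset : (Finset.Icc M N).filter (fun n : ℤ => Beta m n ∧ ((n : ZMod p) = c))
          = insert (a - p)
            (((Finset.Icc M N).filter (fun n : ℤ => Beta l n ∧ ((n : ZMod p) = c))).erase a) := by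
        ext n
        simp only [Finset.mem_filter, Finset.mem_insert, Finset.mem_erase, Finset.mem_Icc,
          hiff n]
        constructor
        · rintro ⟨⟨hMn, hnN⟩, ⟨hna, h2⟩, hcl⟩
          rcases h2 with rfl | hbl
          · exact Or.inl rfl
          · exact Or.inr ⟨hna, ⟨hMn, hnN⟩, hbl, hcl⟩
        · rintro (rfl | ⟨hna, ⟨hMn, hnN⟩, hbl, hcl⟩)
          · exact ⟨⟨haM, by omega⟩, ⟨by omega, Or.inl rfl⟩, by rw [hap]; exact hc⟩
          · exact ⟨⟨hMn, hnN⟩, ⟨hna, Or.inr hbl⟩, hcl⟩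
      have hpos : 1 ≤ ((Finset.Icc M N).filter (fun n : ℤ => Beta l n ∧ ((n : ZMod p) = c))).card :=
        Finset.card_pos.2 ⟨a, hmem⟩
      rw [hset, Finset.card_insert_of_notMem, Finset.card_erase_of_mem hmem]
      · omega
      · intro hmem2
        rw [Finset.mem_erase] at hmem2
        rw [Finset.mem_filter] at hmem2
        exact hnal hmem2.2.2.1
    · have hset : (Finset.Icc M N).filter (fun n : ℤ => Beta m n ∧ ((n : ZMod p) = c))
          = (Finset.Icc M N).filter (fun n : ℤ => Beta l n ∧ ((n : ZMod p) = c)) := by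
        ext n
        simp only [Finset.mem_filter, Finset.mem_Icc, hiff n]
        constructor
        · rintro ⟨hn, ⟨hna, h2⟩, hcl⟩
          rcases h2 with rfl | hbl
          · exact absurd hcl (by rw [hap]; exact hc)
          · exact ⟨hn, hbl, hcl⟩
        · rintro ⟨hn, hbl, hcl⟩
          refine ⟨hn, ⟨?_, Or.inr hbl⟩, hcl⟩
          rintro rfl
          exact hc hcl
      rw [hset]
  unfold DD
  rw [hcnt]

lemma DDc_empty (p : ℕ) (e : Ptn) (he : ∀ i, 1 ≤ i → e.part i = 0) (c : ZMod p) :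
    DDc p e c = 0 := by
  have hh : e.height = 0 := by
    have hset : {i | 1 ≤ i ∧ e.part i ≠ 0} = ∅ := by
      ext i
      simp only [Set.mem_setOf_eq, Set.mem_empty_iff_false, iff_false, not_and]
      intro h1 h2
      exact h2 (he i h1)
    simp [Ptn.height, hset]
  have hB : ∀ n : ℤ, Beta e n ↔ n ≤ -1 := by
    intro n
    rw [e.beta_iff, hh]
    constructor
    · rintro (h | ⟨i, h1, h2, -⟩)
      · omega
      · omega
    · intro h
      exact Or.inl (by omega)
  unfold DDc DD cntB cntE
  rw [sub_eq_zero]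
  have : ((Finset.Icc (-(e.height : ℤ) - 1) ((e.part 1 : ℤ))).filter
        (fun n : ℤ => Beta e n ∧ ((n : ZMod p) = c)))
      = ((Finset.Icc (-(e.height : ℤ) - 1) ((e.part 1 : ℤ))).filter
        (fun n : ℤ => n ≤ -1 ∧ ((n : ZMod p) = c))) :=
    Finset.filter_congr (fun n _ => by rw [hB n])
  rw [this]

lemma DDc_formula (p : ℕ) (l : Ptn) (hh : 1 ≤ l.height) (c : ZMod p) :
    DDc p l c
      = (((Finset.Icc 1 l.height).filter (fun i : ℕ => ((l.betaF i : ℤ) : ZMod p) = c)).card : ℤ)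
      - (((Finset.Icc 1 l.height).filter (fun j : ℕ => (((-(j : ℤ)) : ℤ) : ZMod p) = c)).card : ℤ) := by
  have hp1 : 1 ≤ l.part 1 := by
    have := l.antitone le_rfl hh
    have := l.part_height_ne_zero hh
    omega
  have hbB : Beta l (-(l.height : ℤ) - 1) := (l.beta_iff _).2 (Or.inl le_rfl)
  have hsplit : Finset.Icc (-(l.height : ℤ) - 1) ((l.part 1 : ℤ))
      = insert (-(l.height : ℤ) - 1) (Finset.Icc (-(l.height : ℤ)) ((l.part 1 : ℤ))) := by
    ext n
    simp only [Finset.mem_Icc, Finset.mem_insert]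
    omega
  have hnotmem : (-(l.height : ℤ) - 1) ∉ Finset.Icc (-(l.height : ℤ)) ((l.part 1 : ℤ)) := by
    simp only [Finset.mem_Icc]
    omega
  -- the inner bead count equals the row count
  have himg : (Finset.Icc (-(l.height : ℤ)) ((l.part 1 : ℤ))).filter
        (fun n : ℤ => Beta l n ∧ ((n : ZMod p) = c))
      = ((Finset.Icc 1 l.height).filter (fun i : ℕ => ((l.betaF i : ℤ) : ZMod p) = c)).image
          (fun i : ℕ => l.betaF i) := by
    ext n
    simp only [Finset.mem_filter, Finset.mem_Icc, Finset.mem_image]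
    constructor
    · rintro ⟨⟨hMn, hnN⟩, hb, hcl⟩
      rcases (l.beta_iff n).1 hb with hlow | ⟨i, h1, h2, he⟩
      · omega
      · exact ⟨i, ⟨⟨h1, h2⟩, by rw [he]; exact hcl⟩, he⟩
    · rintro ⟨i, ⟨⟨h1, h2⟩, hcl⟩, rfl⟩
      refine ⟨⟨l.betaF_ge_neg_height h1 h2, (l.beta_lt_top ⟨i, h1, rfl⟩).le⟩, ⟨i, h1, rfl⟩, hcl⟩
  have hinj : Set.InjOn (fun i : ℕ => l.betaF i)
      ((Finset.Icc 1 l.height).filter (fun i : ℕ => ((l.betaF i : ℤ) : ZMod p) = c)) := by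
    intro i hi j hj he
    simp only [Finset.coe_filter, Set.mem_setOf_eq, Finset.mem_Icc] at hi hj
    rcases lt_trichotomy i j with h | h | h
    · exact absurd he (by have := l.betaF_strictAnti hi.1.1 h; simp only; omega)
    · exact h
    · exact absurd he (by have := l.betaF_strictAnti hj.1.1 h; simp only; omega)
  -- the inner space count equals the column count
  have himgE : (Finset.Icc (-(l.height : ℤ)) ((l.part 1 : ℤ))).filter
        (fun n : ℤ => n ≤ -1 ∧ ((n : ZMod p) = c))
      = ((Finset.Icc 1 l.height).filter (fun j : ℕ => (((-(j : ℤ)) : ℤ) : ZMod p) = c)).image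
          (fun j : ℕ => -(j : ℤ)) := by
    ext n
    simp only [Finset.mem_filter, Finset.mem_Icc, Finset.mem_image]
    constructor
    · rintro ⟨⟨hMn, hnN⟩, hn1, hcl⟩
      refine ⟨(-n).toNat, ⟨⟨by omega, by omega⟩, ?_⟩, by omega⟩
      have : (-(((-n).toNat : ℤ))) = n := by omega
      rw [this]
      exact hcl
    · rintro ⟨j, ⟨⟨h1, h2⟩, hcl⟩, rfl⟩
      exact ⟨⟨by omega, by omega⟩, by omega, hcl⟩
  have hinjE : Set.InjOn (fun j : ℕ => -(j : ℤ))
      ((Finset.Icc 1 l.height).filter (fun j : ℕ => (((-(j : ℤ)) : ℤ) : ZMod p) = c)) := by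
    intro i _ j _ he
    simp only at he
    omega
  unfold DDc DD cntB cntE
  rw [hsplit, Finset.filter_insert, Finset.filter_insert]
  by_cases hc1 : (((-(l.height : ℤ) - 1 : ℤ)) : ZMod p) = c
  · rw [if_pos ⟨hbB, hc1⟩, if_pos ⟨by omega, hc1⟩,
      Finset.card_insert_of_notMem (fun hx => hnotmem (Finset.filter_subset _ _ hx)),
      Finset.card_insert_of_notMem (fun hx => hnotmem (Finset.filter_subset _ _ hx)),
      himg, himgE, Finset.card_image_of_injOn hinj, Finset.card_image_of_injOn hinjE]
    push_cast
    ring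
  · rw [if_neg (fun hx => hc1 hx.2), if_neg (fun hx => hc1 hx.2),
      himg, himgE, Finset.card_image_of_injOn hinj, Finset.card_image_of_injOn hinjE]

lemma coreResidues (p : ℕ) (hp : 0 < p) (l : Ptn) (hcl : EmptyCore p l)
    (hh : 1 ≤ l.height) (c : ZMod p) :
    ((Finset.Icc 1 l.height).filter (fun i : ℕ => ((l.betaF i : ℤ) : ZMod p) = c)).card
      = ((Finset.Icc 1 l.height).filter (fun j : ℕ => (((-(j : ℤ)) : ℤ) : ZMod p) = c)).card := by
  obtain ⟨e, ⟨hrt, -⟩, he⟩ := hcl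
  have hchain : ∀ e', Relation.ReflTransGen (RemoveHook p) l e' → DDc p l c = DDc p e' c := by
    intro e' hstep
    induction hstep with
    | refl => rfl
    | tail _ hstep ih => exact ih.trans (DDc_hook p hp hstep c)
  have h0 : DDc p l c = 0 := (hchain e hrt).trans (DDc_empty p e he c)
  have hf := DDc_formula p l hh c
  rw [h0] at hf
  omega

end Aux

/-- If `χ(λ) = p`, both `λ` and `μ` have empty `p`-core, `h(μ) ≤ h(λ) < p`, and every
`μ`-normal node has the residue of the bottom `λ`-removable node, then `h(μ) < h(λ)`. -/
theorem stmt19 (p : ℕ) (hp : 0 < p) (l m : Ptn)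
    (hchi : (l.part 1 : ℤ) - (l.part l.height : ℤ) + (l.height : ℤ) = (p : ℤ))
    (hcl : EmptyCore p l) (hcm : EmptyCore p m)
    (hhm : m.height ≤ l.height) (hhl : l.height < p)
    (hres : ∀ r, m.Normal p r → m.remRes p r = l.remRes p l.height) :
    m.height < l.height := by
  by_contra hcon
  have hEq : m.height = l.height := le_antisymm hhm (not_lt.1 hcon)
  have hh1 : 1 ≤ l.height := by
    by_contra h0
    have h00 : l.height = 0 := by omega
    have hz : l.part 1 = 0 := l.part_eq_zero_of_height_lt (by omega)
    rw [h00, hz] at hchi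
    push_cast at hchi
    omega
  have hcoreL := coreResidues p hp l hcl hh1
  have hcoreM : ∀ c : ZMod p,
      ((Finset.Icc 1 l.height).filter (fun i : ℕ => ((m.betaF i : ℤ) : ZMod p) = c)).card
        = ((Finset.Icc 1 l.height).filter (fun j : ℕ => (((-(j : ℤ)) : ℤ) : ZMod p) = c)).card := by
    intro c
    have := coreResidues p hp m hcm (by rw [hEq]; exact hh1) c
    rwa [hEq] at this
  have F2 : ∀ i, 1 ≤ i → i ≤ l.height →
      ((m.betaF i : ℤ) : ZMod p) ≠ (((-(l.height : ℤ) - 1 : ℤ)) : ZMod p) := by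
    intro i h1 h2 hcc
    have hcard := hcoreM ((((-(l.height : ℤ) - 1 : ℤ)) : ZMod p))
    have hR : ((Finset.Icc 1 l.height).filter
        (fun j : ℕ => (((-(j : ℤ)) : ℤ) : ZMod p)
          = (((-(l.height : ℤ) - 1 : ℤ)) : ZMod p))).card = 0 := by
      rw [Finset.card_eq_zero, Finset.filter_eq_empty_iff]
      intro j hj hcj
      rw [Finset.mem_Icc] at hj
      rw [zmod_eq_iff] at hcj
      have := int_dvd_small (by exact_mod_cast hp) hcj (by omega) (by omega)
      omega
    have hL : i ∈ (Finset.Icc 1 l.height).filter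
        (fun i : ℕ => ((m.betaF i : ℤ) : ZMod p) = (((-(l.height : ℤ) - 1 : ℤ)) : ZMod p)) := by
      rw [Finset.mem_filter, Finset.mem_Icc]
      exact ⟨⟨h1, h2⟩, hcc⟩
    have := Finset.card_pos.2 ⟨i, hL⟩
    omega
  have F1 : ∃ i, 1 ≤ i ∧ i ≤ l.height ∧
      ((m.betaF i : ℤ) : ZMod p) = (((-(l.height : ℤ)) : ℤ) : ZMod p) := by
    have hcard := hcoreM ((((-(l.height : ℤ)) : ℤ)) : ZMod p)
    have hmemh : l.height ∈ (Finset.Icc 1 l.height).filter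
        (fun j : ℕ => (((-(j : ℤ)) : ℤ) : ZMod p) = (((-(l.height : ℤ)) : ℤ) : ZMod p)) := by
      rw [Finset.mem_filter, Finset.mem_Icc]
      exact ⟨⟨hh1, le_rfl⟩, rfl⟩
    have hpos := Finset.card_pos.2 ⟨_, hmemh⟩
    rw [← hcard] at hpos
    obtain ⟨i, hi⟩ := Finset.card_pos.1 hpos
    rw [Finset.mem_filter, Finset.mem_Icc] at hi
    exact ⟨i, hi.1.1, hi.1.2, hi.2⟩
  have hF3 : ((l.betaF l.height : ℤ) : ZMod p) ≠ (((-(l.height : ℤ)) : ℤ) : ZMod p) := by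
    intro hc
    have hcard := hcoreL ((l.betaF 1 : ℤ) : ZMod p)
    have hmem1 : (1 : ℕ) ∈ (Finset.Icc 1 l.height).filter
        (fun i : ℕ => ((l.betaF i : ℤ) : ZMod p) = ((l.betaF 1 : ℤ) : ZMod p)) := by
      rw [Finset.mem_filter, Finset.mem_Icc]
      exact ⟨⟨le_rfl, hh1⟩, rfl⟩
    have hpos := Finset.card_pos.2 ⟨_, hmem1⟩
    rw [hcard] at hpos
    obtain ⟨j₁, hj₁⟩ := Finset.card_pos.1 hpos
    rw [Finset.mem_filter, Finset.mem_Icc] at hj₁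
    obtain ⟨⟨hj1, hj2⟩, hjc⟩ := hj₁
    have hb1 : l.betaF 1 = l.betaF l.height + (p : ℤ) - 1 := by
      unfold Ptn.betaF
      omega
    rw [zmod_eq_iff] at hjc hc
    have hd3 : (p : ℤ) ∣ ((l.betaF 1 - (-(j₁ : ℤ))) + ((-(l.height : ℤ)) - l.betaF l.height)
        - (p : ℤ)) := dvd_sub (dvd_add hjc hc) dvd_rfl
    have hval : ((l.betaF 1 - (-(j₁ : ℤ))) + ((-(l.height : ℤ)) - l.betaF l.height) - (p : ℤ))
        = (j₁ : ℤ) - 1 - (l.height : ℤ) := by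
      rw [hb1]; ring
    rw [hval] at hd3
    have := int_dvd_small (by exact_mod_cast hp) hd3 (by omega) (by omega)
    omega
  obtain ⟨i₀, hi1, hi2, hic⟩ := F1
  by_cases hrem : m.part (i₀ + 1) < m.part i₀
  · have hnorm : m.Normal p i₀ := by
      refine ⟨⟨hi1, hrem⟩, fun u hu hui => ?_⟩
      have hempty : (Finset.Ico u i₀).filter
          (fun i => m.Addable i ∧ m.addRes p i = m.remRes p i₀) = ∅ := by
        rw [Finset.filter_eq_empty_iff]
        rintro i hi ⟨-, hres2⟩
        rw [Finset.mem_Ico] at hi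
        have h1i : 1 ≤ i := hu.trans hi.1
        have h2i : i ≤ l.height := by omega
        refine F2 i h1i h2i ?_
        rw [Ptn.addRes_eq_betaF p m i, Ptn.remRes_eq_betaF p m i₀, hic] at hres2
        rw [zmod_eq_iff] at hres2 ⊢
        have hrg : (-(l.height : ℤ) - 1) - m.betaF i = (-(l.height : ℤ)) - (m.betaF i + 1) := by
          ring
        rw [hrg]
        exact hres2
      rw [hempty]
      simp
    have hfin := hres i₀ hnorm
    rw [Ptn.remRes_eq_betaF p m i₀, Ptn.remRes_eq_betaF p l l.height, hic] at hfin
    exact hF3 hfin.symm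
  · have hle : m.part (i₀ + 1) ≤ m.part i₀ := m.antitone hi1 (Nat.le_succ i₀)
    have heq2 : m.part (i₀ + 1) = m.part i₀ := by omega
    have hne2 : m.part (i₀ + 1) ≠ 0 := by
      rw [heq2]
      exact m.part_ne_zero hi1 (by omega)
    have hlt2 : i₀ + 1 ≤ l.height := by
      by_contra hx
      exact hne2 (m.part_eq_zero_of_height_lt (by omega))
    refine F2 (i₀ + 1) (by omega) hlt2 ?_
    have hbb : m.betaF (i₀ + 1) = m.betaF i₀ - 1 := by
      unfold Ptn.betaF
      rw [heq2]
      push_cast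
      ring
    rw [hbb, zmod_eq_iff]
    rw [zmod_eq_iff] at hic
    have hrg : (-(l.height : ℤ) - 1) - (m.betaF i₀ - 1) = (-(l.height : ℤ)) - m.betaF i₀ := by
      ring
    rw [hrg]
    exact hic
end
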